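/- arXiv:1502.02790 — 3 statements merged into one kernel-verified Lean document; each statement's English description precedes it below -/
import Mathlib

section
/- Let p be a prime and k = F_p, with Y = y^{p-1}, V = v^{p-1} for v = u^p − y^{p-1}u, D_1 = Y^p + V, D_2 = Y·V in k[y,u]. Then k[Y,V] is a free module over k[D_1,D_2] with basis {1, Y, Y^2, …, Y^p}. -/
open MvPolynomial

namespace Stmt5Aux

noncomputable section

variable {K : Type*} [CommRing K]

/-- base-`m` digit separation -/
lemma digits {m : ℕ} (f : Fin m → Polynomial K)
    (hf : ∀ i n, ¬ m ∣ n → (f i).coeff n = 0)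
    (h : ∑ i, f i * Polynomial.X ^ (i : ℕ) = 0) (i : Fin m) : f i = 0 := by
  ext n
  simp only [Polynomial.coeff_zero]
  by_cases hn : m ∣ n
  · obtain ⟨b, rfl⟩ := hn
    have hc := congrArg (fun q => Polynomial.coeff q (m * b + i)) h
    simp only [Polynomial.finset_sum_coeff, Polynomial.coeff_zero] at hc
    rw [Finset.sum_eq_single i] at hc
    · rw [Polynomial.coeff_mul_X_pow'] at hc
      simpa using hc
    · intro j _ hj
      have hji' : (j : ℕ) ≠ (i : ℕ) := fun h' => hj (Fin.ext h')
      rw [Polynomial.coeff_mul_X_pow']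
      split_ifs with hji
      · apply hf
        intro hdvd
        rcases le_or_gt (j : ℕ) (i : ℕ) with hle | hlt
        · have e : m * b + (i : ℕ) - (j : ℕ) = m * b + ((i : ℕ) - (j : ℕ)) := by omega
          rw [e] at hdvd
          have h2 : m ∣ ((i : ℕ) - (j : ℕ)) := (Nat.dvd_add_right ⟨b, rfl⟩).mp hdvd
          have h3 := Nat.le_of_dvd (by omega) h2
          have := i.isLt
          omega
        · have h2 : m ∣ (m * b - (m * b + (i : ℕ) - (j : ℕ))) := Nat.dvd_sub ⟨b, rfl⟩ hdvd
          have e : m * b - (m * b + (i : ℕ) - (j : ℕ)) = (j : ℕ) - (i : ℕ) := by omega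
          rw [e] at h2
          have h3 := Nat.le_of_dvd (by omega) h2
          have := j.isLt
          omega
      · rfl
    · intro hi; exact absurd (Finset.mem_univ i) hi
  · exact hf i n hn

variable (K)

/-- `Θ : (K[y])[x][X] → K[y][X]`, outer variable ↦ `X`, inner MvPolynomial var ↦
`C y * X - C (y^m)`. -/
def Th (m : ℕ) : Polynomial (MvPolynomial (Fin 1) K) →ₐ[K] Polynomial (Polynomial K) :=
  Polynomial.aevalTower
    (MvPolynomial.aeval
      ![Polynomial.C Polynomial.X * Polynomial.X - Polynomial.C (Polynomial.X ^ m)])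
    Polynomial.X

lemma Th_X (m : ℕ) : Th K m Polynomial.X = Polynomial.X :=
  Polynomial.aevalTower_X _ _

lemma Th_C (m : ℕ) (a : MvPolynomial (Fin 1) K) :
    Th K m (Polynomial.C a) =
      MvPolynomial.aeval
        ![Polynomial.C Polynomial.X * Polynomial.X - Polynomial.C (Polynomial.X ^ m)] a :=
  Polynomial.aevalTower_C _ _ _

lemma eval0_inner (m : ℕ) (a : MvPolynomial (Fin 1) K) :
    Polynomial.eval 0
        (MvPolynomial.aeval
          ![Polynomial.C Polynomial.X * Polynomial.X - Polynomial.C (Polynomial.X ^ m)] a) =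
      MvPolynomial.aeval ![-(Polynomial.X ^ m : Polynomial K)] a := by
  have : (Polynomial.evalRingHom (0 : Polynomial K)).comp
        (MvPolynomial.aeval (R := K)
          ![Polynomial.C Polynomial.X * Polynomial.X -
            Polynomial.C (Polynomial.X ^ m)]).toRingHom =
      (MvPolynomial.aeval (R := K) ![-(Polynomial.X ^ m : Polynomial K)]).toRingHom := by
    apply MvPolynomial.ringHom_ext
    · intro r
      simp [MvPolynomial.algebraMap_eq, Polynomial.algebraMap_apply]
    · intro i
      fin_cases i
      simp
  exact congrArg (fun f => f a) (congrArg (fun (f : _ →+* _) => (f : _ → _)) this)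

lemma eval0_Th (m : ℕ) (v : Polynomial (MvPolynomial (Fin 1) K)) :
    Polynomial.eval 0 (Th K m v) =
      MvPolynomial.aeval ![-(Polynomial.X ^ m : Polynomial K)] (v.coeff 0) := by
  conv_lhs => rw [← Polynomial.X_mul_divX_add v]
  rw [map_add, map_mul, Th_X, Th_C, Polynomial.eval_add, Polynomial.eval_mul, Polynomial.eval_X,
    zero_mul, zero_add, eval0_inner]

lemma expand_inner (m : ℕ) (a : MvPolynomial (Fin 1) K) :
    MvPolynomial.aeval ![-(Polynomial.X ^ m : Polynomial K)] a =
      Polynomial.expand K m (MvPolynomial.aeval ![-(Polynomial.X : Polynomial K)] a) := by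
  have : (MvPolynomial.aeval (R := K) ![-(Polynomial.X ^ m : Polynomial K)]) =
      (Polynomial.expand K m).comp
        (MvPolynomial.aeval ![-(Polynomial.X : Polynomial K)]) := by
    apply MvPolynomial.algHom_ext
    intro i
    fin_cases i
    simp
  rw [this]; rfl

lemma inner_inj (a : MvPolynomial (Fin 1) K)
    (h : MvPolynomial.aeval ![-(Polynomial.X : Polynomial K)] a = 0) : a = 0 := by
  have hcomp : (Polynomial.aeval (-(X 0 : MvPolynomial (Fin 1) K))).comp
      (MvPolynomial.aeval ![-(Polynomial.X : Polynomial K)]) = AlgHom.id K _ := by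
    apply MvPolynomial.algHom_ext
    intro i
    fin_cases i
    simp
  have := congrArg (fun (f : _ →ₐ[K] _) => f a) hcomp
  simp only [AlgHom.comp_apply, AlgHom.id_apply] at this
  rw [h, map_zero] at this
  exact this.symm

lemma key {K : Type*} [Field K] (m : ℕ) (hm : 0 < m) :
    ∀ (n : ℕ) (w : Fin m → Polynomial (MvPolynomial (Fin 1) K)),
      (∀ i, (w i).natDegree ≤ n) →
      (∑ i, Th K m (w i) * (Polynomial.C Polynomial.X) ^ (i : ℕ) = 0) →
      ∀ i, w i = 0 := by
  intro n
  induction n with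
  | zero =>
    intro w hdeg hsum i
    have hc0 : ∀ j, (w j).coeff 0 = 0 := by
      have h0 := congrArg (Polynomial.eval 0) hsum
      simp only [Polynomial.eval_finset_sum, Polynomial.eval_mul, Polynomial.eval_pow,
        Polynomial.eval_C, Polynomial.eval_zero, eval0_Th] at h0
      intro j
      have := digits (K := K)
        (fun j => MvPolynomial.aeval ![-(Polynomial.X ^ m : Polynomial K)] ((w j).coeff 0))
        (fun j n hn => by
          show ((MvPolynomial.aeval ![-(Polynomial.X ^ m : Polynomial K)]) ((w j).coeff 0)).coeff n = 0
          rw [expand_inner, Polynomial.coeff_expand hm, if_neg hn])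
        h0 j
      rw [expand_inner] at this
      exact inner_inj K _ (Polynomial.expand_injective hm (by simpa using this))
    rw [Polynomial.eq_C_of_natDegree_le_zero (hdeg i), hc0 i, map_zero]
  | succ n ih =>
    intro w hdeg hsum i
    have hc0 : ∀ j, (w j).coeff 0 = 0 := by
      have h0 := congrArg (Polynomial.eval 0) hsum
      simp only [Polynomial.eval_finset_sum, Polynomial.eval_mul, Polynomial.eval_pow,
        Polynomial.eval_C, Polynomial.eval_zero, eval0_Th] at h0
      intro j
      have := digits (K := K)
        (fun j => MvPolynomial.aeval ![-(Polynomial.X ^ m : Polynomial K)] ((w j).coeff 0))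
        (fun j n hn => by
          show ((MvPolynomial.aeval ![-(Polynomial.X ^ m : Polynomial K)]) ((w j).coeff 0)).coeff n = 0
          rw [expand_inner, Polynomial.coeff_expand hm, if_neg hn])
        h0 j
      rw [expand_inner] at this
      exact inner_inj K _ (Polynomial.expand_injective hm (by simpa using this))
    have hw : ∀ j, w j = Polynomial.X * (w j).divX := by
      intro j
      conv_lhs => rw [← Polynomial.X_mul_divX_add (w j)]
      rw [hc0 j, map_zero, add_zero]
    have hsum' : ∑ j, Th K m ((w j).divX) * (Polynomial.C Polynomial.X) ^ (j : ℕ) = 0 := by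
      have : (Polynomial.X : Polynomial (Polynomial K)) *
          ∑ j, Th K m ((w j).divX) * (Polynomial.C Polynomial.X) ^ (j : ℕ) = 0 := by
        rw [Finset.mul_sum]
        rw [← hsum]
        apply Finset.sum_congr rfl
        intro j _
        conv_rhs => rw [hw j]
        rw [map_mul, Th_X, mul_assoc]
      rcases mul_eq_zero.mp this with h | h
      · exact absurd h Polynomial.X_ne_zero
      · exact h
    have hz := ih (fun j => (w j).divX)
      (fun j => by
        show ((w j).divX).natDegree ≤ n
        have h1 := Polynomial.natDegree_divX_eq_natDegree_tsub_one (p := w j)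
        have h2 := hdeg j
        omega)
      hsum' i
    rw [hw i, hz, mul_zero]

end
end Stmt5Aux
namespace Stmt5Aux

noncomputable section Maps

variable (p : ℕ)

/-- `Ω : k[Y,V] → k[y][X]`, `Y ↦ C y`, `V ↦ X - C (y^p)`. -/
def Om : MvPolynomial (Fin 2) (ZMod p) →ₐ[ZMod p] Polynomial (Polynomial (ZMod p)) :=
  MvPolynomial.aeval ![Polynomial.C Polynomial.X,
    Polynomial.X - Polynomial.C (Polynomial.X ^ p)]

/-- left inverse of `Om`. -/
def piOm : Polynomial (Polynomial (ZMod p)) →ₐ[ZMod p] MvPolynomial (Fin 2) (ZMod p) :=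
  Polynomial.aevalTower (Polynomial.aeval (X 0)) (X 1 + (X 0) ^ p)

lemma Om_leftInv : Function.LeftInverse (piOm p) (Om p) := by
  intro s
  have hcomp : (piOm p).comp (Om p) = AlgHom.id (ZMod p) (MvPolynomial (Fin 2) (ZMod p)) := by
    apply MvPolynomial.algHom_ext
    intro i
    fin_cases i
    · simp [Om, piOm]
    · simp [Om, piOm, Polynomial.aevalTower_X]
  have := congrArg (fun (f : _ →ₐ[ZMod p] _) => f s) hcomp
  simpa using this

lemma Om_inj : Function.Injective (Om p) :=
  (Om_leftInv p).injective

lemma Om_X0 : Om p (X 0) = Polynomial.C Polynomial.X := by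
  simp [Om]

lemma Om_aeval :
    (Om p).comp (MvPolynomial.aeval
        ![(X 0 : MvPolynomial (Fin 2) (ZMod p)) ^ p + X 1, X 0 * X 1]) =
      (Th (ZMod p) (p + 1)).comp (finSuccEquiv (ZMod p) 1).toAlgHom := by
  apply MvPolynomial.algHom_ext
  intro i
  induction i using Fin.cases with
  | zero =>
    simp only [AlgHom.comp_apply, AlgEquiv.toAlgHom_eq_coe, AlgHom.coe_coe,
      AlgEquiv.coe_toAlgHom, MvPolynomial.aeval_X, Matrix.cons_val_zero, finSuccEquiv_X_zero, Th_X]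
    simp only [Om, map_add, map_pow, MvPolynomial.aeval_X, Matrix.cons_val_zero,
      Matrix.cons_val_one, Matrix.head_cons]
    rw [← Polynomial.C_pow]
    ring
  | succ j =>
    have hj : j = 0 := Subsingleton.elim _ _
    subst hj
    simp only [AlgHom.comp_apply, AlgEquiv.toAlgHom_eq_coe, AlgHom.coe_coe,
      AlgEquiv.coe_toAlgHom, MvPolynomial.aeval_X, finSuccEquiv_X_succ, Th_C]
    have e : (![(X 0 : MvPolynomial (Fin 2) (ZMod p)) ^ p + X 1, X 0 * X 1]) (Fin.succ 0)
        = X 0 * X 1 := rfl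
    rw [e]
    simp only [Om, map_mul, MvPolynomial.aeval_X, Matrix.cons_val_zero, Matrix.cons_val_one,
      Matrix.head_cons]
    rw [mul_sub, ← Polynomial.C_mul, ← pow_succ']
end Maps

end Stmt5Aux

open Stmt5Aux in
/-- With `Y = X 0`, `V = X 1` algebraically independent, `D_1 = Y^p + V`, `D_2 = Y·V`,
the ring `k[Y,V]` is a free module over the Dickson algebra `k[D_1,D_2]` with basis
`1, Y, …, Y^p`. -/
theorem stmt_5 (p : ℕ) (hp : p.Prime) :
    let Y : MvPolynomial (Fin 2) (ZMod p) := X 0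
    let V : MvPolynomial (Fin 2) (ZMod p) := X 1
    ∃ b : Module.Basis (Fin (p + 1)) (Algebra.adjoin (ZMod p) {Y ^ p + V, Y * V})
        (MvPolynomial (Fin 2) (ZMod p)),
      ∀ i : Fin (p + 1), b i = Y ^ (i : ℕ) := by
  haveI : Fact p.Prime := ⟨hp⟩
  intro Y V
  have hY : Y = X 0 := rfl
  have hV : V = X 1 := rfl
  have hD1R : Y ^ p + V ∈ Algebra.adjoin (ZMod p) {Y ^ p + V, Y * V} :=
    Algebra.subset_adjoin (Set.mem_insert _ _)
  have hD2R : Y * V ∈ Algebra.adjoin (ZMod p) {Y ^ p + V, Y * V} :=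
    Algebra.subset_adjoin (Set.mem_insert_of_mem _ rfl)
  -- the span statement
  have hspan : ⊤ ≤ Submodule.span (Algebra.adjoin (ZMod p) {Y ^ p + V, Y * V})
      (Set.range fun i : Fin (p + 1) => Y ^ (i : ℕ)) := by
    have hgen : ∀ j : ℕ, j ≤ p → Y ^ j ∈ Submodule.span
        (Algebra.adjoin (ZMod p) {Y ^ p + V, Y * V})
        (Set.range fun i : Fin (p + 1) => Y ^ (i : ℕ)) :=
      fun j hj => Submodule.subset_span ⟨⟨j, by omega⟩, rfl⟩
    have hmulmem : ∀ d : MvPolynomial (Fin 2) (ZMod p),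
        d ∈ Algebra.adjoin (ZMod p) {Y ^ p + V, Y * V} →
        ∀ x ∈ Submodule.span (Algebra.adjoin (ZMod p) {Y ^ p + V, Y * V})
          (Set.range fun i : Fin (p + 1) => Y ^ (i : ℕ)),
        d * x ∈ Submodule.span (Algebra.adjoin (ZMod p) {Y ^ p + V, Y * V})
          (Set.range fun i : Fin (p + 1) => Y ^ (i : ℕ)) := by
      intro d hd x hx
      have := Submodule.smul_mem _ (⟨d, hd⟩ :
        Algebra.adjoin (ZMod p) {Y ^ p + V, Y * V}) hx
      rwa [Subalgebra.smul_def, smul_eq_mul] at this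
    have hbig : ∀ j : ℕ, j ≤ p → Y ^ (p + j) ∈ Submodule.span
        (Algebra.adjoin (ZMod p) {Y ^ p + V, Y * V})
        (Set.range fun i : Fin (p + 1) => Y ^ (i : ℕ)) := by
      intro j hj
      rcases Nat.eq_zero_or_pos j with rfl | hj0
      · simpa using hgen p le_rfl
      · obtain ⟨j', rfl⟩ : ∃ j', j = j' + 1 := ⟨j - 1, by omega⟩
        have hid : Y ^ (p + (j' + 1)) = (Y ^ p + V) * Y ^ (j' + 1) - (Y * V) * Y ^ j' := by
          ring
        rw [hid]
        exact Submodule.sub_mem _ (hmulmem _ hD1R _ (hgen _ (by omega)))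
          (hmulmem _ hD2R _ (hgen _ (by omega)))
    have hcY : ∀ x ∈ Submodule.span (Algebra.adjoin (ZMod p) {Y ^ p + V, Y * V})
        (Set.range fun i : Fin (p + 1) => Y ^ (i : ℕ)),
        x * Y ∈ Submodule.span (Algebra.adjoin (ZMod p) {Y ^ p + V, Y * V})
          (Set.range fun i : Fin (p + 1) => Y ^ (i : ℕ)) := by
      intro x hx
      induction hx using Submodule.span_induction with
      | mem y hy =>
        obtain ⟨i, rfl⟩ := hy
        rcases Nat.lt_or_ge (i : ℕ) p with h | h
        · have e : Y ^ (i : ℕ) * Y = Y ^ ((i : ℕ) + 1) := by ring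
          rw [e]; exact hgen _ (by omega)
        · have hip : (i : ℕ) = p := by have := i.isLt; omega
          have e : Y ^ (i : ℕ) * Y = Y ^ (p + 1) := by rw [hip]; ring
          rw [e]; exact hbig 1 (by have := hp.two_le; omega)
      | zero => simpa using Submodule.zero_mem _
      | add a b ha hb iha ihb => rw [add_mul]; exact Submodule.add_mem _ iha ihb
      | smul r a ha ih => rw [Algebra.smul_mul_assoc]; exact Submodule.smul_mem _ r ih
    have hcV : ∀ x ∈ Submodule.span (Algebra.adjoin (ZMod p) {Y ^ p + V, Y * V})
        (Set.range fun i : Fin (p + 1) => Y ^ (i : ℕ)),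
        x * V ∈ Submodule.span (Algebra.adjoin (ZMod p) {Y ^ p + V, Y * V})
          (Set.range fun i : Fin (p + 1) => Y ^ (i : ℕ)) := by
      intro x hx
      induction hx using Submodule.span_induction with
      | mem y hy =>
        obtain ⟨i, rfl⟩ := hy
        have e : Y ^ (i : ℕ) * V = (Y ^ p + V) * Y ^ (i : ℕ) - Y ^ (p + (i : ℕ)) := by ring
        rw [e]
        exact Submodule.sub_mem _
          (hmulmem _ hD1R _ (hgen _ (by have := i.isLt; omega)))
          (hbig _ (by have := i.isLt; omega))
      | zero => simpa using Submodule.zero_mem _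
      | add a b ha hb iha ihb => rw [add_mul]; exact Submodule.add_mem _ iha ihb
      | smul r a ha ih => rw [Algebra.smul_mul_assoc]; exact Submodule.smul_mem _ r ih
    have hall : ∀ s : MvPolynomial (Fin 2) (ZMod p),
        s ∈ Submodule.span (Algebra.adjoin (ZMod p) {Y ^ p + V, Y * V})
          (Set.range fun i : Fin (p + 1) => Y ^ (i : ℕ)) := by
      intro s
      induction s using MvPolynomial.induction_on with
      | C a =>
        have h1 : (1 : MvPolynomial (Fin 2) (ZMod p)) ∈ Submodule.span
            (Algebra.adjoin (ZMod p) {Y ^ p + V, Y * V})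
            (Set.range fun i : Fin (p + 1) => Y ^ (i : ℕ)) := by
          simpa using hgen 0 (Nat.zero_le p)
        have hCmem : (C a : MvPolynomial (Fin 2) (ZMod p)) ∈
            Algebra.adjoin (ZMod p) {Y ^ p + V, Y * V} := by
          rw [← MvPolynomial.algebraMap_eq]
          exact Subalgebra.algebraMap_mem _ a
        simpa using hmulmem _ hCmem 1 h1
      | add f g hf hg => exact Submodule.add_mem _ hf hg
      | mul_X f n hf =>
        rcases (by omega : (n : ℕ) = 0 ∨ (n : ℕ) = 1) with h | h
        · have : n = 0 := Fin.ext h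
          rw [this, ← hY]; exact hcY f hf
        · have : n = 1 := Fin.ext h
          rw [this, ← hV]; exact hcV f hf
    intro s _
    exact hall s
  -- linear independence
  have hli : LinearIndependent (Algebra.adjoin (ZMod p) {Y ^ p + V, Y * V})
      (fun i : Fin (p + 1) => Y ^ (i : ℕ)) := by
    rw [Fintype.linearIndependent_iff]
    intro g hg
    have hg' : ∑ i : Fin (p + 1),
        ((g i : MvPolynomial (Fin 2) (ZMod p))) * Y ^ (i : ℕ) = 0 := by
      rw [← hg]
      apply Finset.sum_congr rfl
      intro i _
      rw [Subalgebra.smul_def, smul_eq_mul]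
    have hrange : Algebra.adjoin (ZMod p) {Y ^ p + V, Y * V} ≤
        (MvPolynomial.aeval (R := ZMod p)
          ![(X 0 : MvPolynomial (Fin 2) (ZMod p)) ^ p + X 1, X 0 * X 1]).range := by
      apply Algebra.adjoin_le
      rintro x (rfl | rfl)
      · exact ⟨X 0, by simp [hY, hV]⟩
      · exact ⟨X 1, by simp [hY, hV]⟩
    have hrep : ∀ i : Fin (p + 1), ∃ t : MvPolynomial (Fin 2) (ZMod p),
        MvPolynomial.aeval
          ![(X 0 : MvPolynomial (Fin 2) (ZMod p)) ^ p + X 1, X 0 * X 1] t = (g i :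
            MvPolynomial (Fin 2) (ZMod p)) := fun i => hrange (g i).2
    choose q hq using hrep
    have hOm : ∀ i : Fin (p + 1), Om p ((g i : MvPolynomial (Fin 2) (ZMod p))) =
        Th (ZMod p) (p + 1) (finSuccEquiv (ZMod p) 1 (q i)) := by
      intro i
      rw [← hq i]
      have := congrArg (fun (f : _ →ₐ[ZMod p] _) => f (q i)) (Om_aeval p)
      simpa using this
    have hsum0 : ∑ i : Fin (p + 1),
        Th (ZMod p) (p + 1) (finSuccEquiv (ZMod p) 1 (q i)) *
          (Polynomial.C Polynomial.X) ^ (i : ℕ) = 0 := by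
      have h2 := congrArg (Om p) hg'
      rw [map_sum, map_zero] at h2
      rw [← h2]
      apply Finset.sum_congr rfl
      intro i _
      rw [map_mul, map_pow, hOm i, hY, Om_X0]
    have hw0 := Stmt5Aux.key (K := ZMod p) (p + 1) (Nat.succ_pos p)
      (Finset.univ.sup fun i : Fin (p + 1) => (finSuccEquiv (ZMod p) 1 (q i)).natDegree)
      (fun i => finSuccEquiv (ZMod p) 1 (q i))
      (fun i => Finset.le_sup
        (f := fun i : Fin (p + 1) => ((finSuccEquiv (ZMod p) 1) (q i)).natDegree)
        (Finset.mem_univ i))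
      hsum0
    intro i
    have hwi : (MvPolynomial.finSuccEquiv (ZMod p) 1) (q i) = 0 := hw0 i
    have hz : Om p ((g i : MvPolynomial (Fin 2) (ZMod p))) = 0 := by
      rw [hOm i, hwi, map_zero]
    have h0 : (g i : MvPolynomial (Fin 2) (ZMod p)) = 0 := Om_inj p (by rw [hz, map_zero])
    exact Subtype.ext h0
  exact ⟨Module.Basis.mk hli hspan, fun i => Module.Basis.mk_apply hli hspan i⟩
end

section
/- Let p be a prime, k = F_p, and CA = k[Y,V], CB = k[Y, D_2], DA = k[D_1,D_2] as above (D_1 = Y^p+V, D_2 = YV). Then CA decomposes as a DA-module into the direct sum DA ⊕ CB·Y, i.e. k[Y,V] ≅ k[D_1,D_2] ⊕ k[Y,D_2]·Y. -/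
open MvPolynomial Finset

namespace Stmt7

set_option linter.unusedSectionVars false
set_option linter.unnecessarySimpa false

variable {k : Type*} [CommRing k] [IsDomain k]


lemma mem_adjoin_pair_iff {S : Type*} [CommRing S] [Algebra k S] (a b x : S) :
    x ∈ Algebra.adjoin k {a, b} ↔ ∃ P : MvPolynomial (Fin 2) k, aeval ![a, b] P = x := by
  constructor
  · intro hx
    have hle : Algebra.adjoin k {a, b} ≤ (aeval (R := k) ![a, b]).range := by
      apply Algebra.adjoin_le
      rintro y (rfl | rfl)
      · exact ⟨X 0, by simp⟩
      · exact ⟨X 1, by simp⟩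
    exact hle hx
  · rintro ⟨P, rfl⟩
    induction P using MvPolynomial.induction_on with
    | C c => simpa using Subalgebra.algebraMap_mem _ c
    | add p q hp hq => rw [map_add]; exact add_mem hp hq
    | mul_X p i hp =>
      rw [map_mul, aeval_X]
      refine mul_mem hp ?_
      fin_cases i
      · exact Algebra.subset_adjoin (Set.mem_insert _ _)
      · exact Algebra.subset_adjoin (Set.mem_insert_of_mem _ rfl)



/-- decomposability predicate -/
def Dec (p : ℕ) (f : MvPolynomial (Fin 2) k) : Prop :=
  ∃ P Q : MvPolynomial (Fin 2) k,
    f = aeval ![X 0 ^ p + X 1, X 0 * X 1] P + X 0 * aeval ![X 0, X 0 * X 1] Q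

variable {p : ℕ}

lemma Dec.add {f g : MvPolynomial (Fin 2) k} (hf : Dec p f) (hg : Dec p g) :
    Dec p (f + g) := by
  obtain ⟨P, Q, rfl⟩ := hf; obtain ⟨P', Q', rfl⟩ := hg
  exact ⟨P + P', Q + Q', by rw [map_add, map_add]; ring⟩

lemma Dec.neg {f : MvPolynomial (Fin 2) k} (hf : Dec p f) : Dec p (-f) := by
  obtain ⟨P, Q, rfl⟩ := hf
  exact ⟨-P, -Q, by rw [map_neg, map_neg]; ring⟩

lemma Dec.zero : Dec p (0 : MvPolynomial (Fin 2) k) := ⟨0, 0, by simp⟩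

lemma Dec.sub {f g : MvPolynomial (Fin 2) k} (hf : Dec p f) (hg : Dec p g) :
    Dec p (f - g) := by rw [sub_eq_add_neg]; exact hf.add hg.neg

lemma Dec.sum {s : Finset ℕ} {F : ℕ → MvPolynomial (Fin 2) k}
    (h : ∀ i ∈ s, Dec p (F i)) : Dec p (∑ i ∈ s, F i) := by
  classical
  induction s using Finset.induction_on with
  | empty => simpa using Dec.zero
  | insert _ _ hx ih =>
    rw [Finset.sum_insert hx]
    exact (h _ (Finset.mem_insert_self _ _)).add
      (ih fun i hi => h i (Finset.mem_insert_of_mem hi))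

lemma Dec.natCast_mul {f : MvPolynomial (Fin 2) k} (n : ℕ) (hf : Dec p f) :
    Dec p ((n : MvPolynomial (Fin 2) k) * f) := by
  obtain ⟨P, Q, rfl⟩ := hf
  exact ⟨(n : MvPolynomial (Fin 2) k) * P, (n : MvPolynomial (Fin 2) k) * Q,
    by rw [map_mul, map_mul, map_natCast, map_natCast]; ring⟩

lemma Dec.C_mul {f : MvPolynomial (Fin 2) k} (c : k) (hf : Dec p f) :
    Dec p (C c * f) := by
  obtain ⟨P, Q, rfl⟩ := hf
  exact ⟨C c * P, C c * Q, by rw [map_mul, map_mul, aeval_C, aeval_C]; simp; ring⟩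

lemma Dec.mulD2 {f : MvPolynomial (Fin 2) k} (hf : Dec p f) :
    Dec p (X 0 * X 1 * f) := by
  obtain ⟨P, Q, rfl⟩ := hf
  refine ⟨X 1 * P, X 1 * Q, ?_⟩
  rw [map_mul, map_mul, aeval_X, aeval_X]
  simp only [Matrix.cons_val_one, Matrix.head_cons, Matrix.cons_val_zero]
  ring

lemma Dec.D1pow (n : ℕ) : Dec p ((X 0 ^ p + X 1 : MvPolynomial (Fin 2) k) ^ n) :=
  ⟨X 0 ^ n, 0, by simp⟩

lemma Dec.Xpow {a : ℕ} (ha : 0 < a) : Dec p ((X 0 : MvPolynomial (Fin 2) k) ^ a) := by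
  obtain ⟨a, rfl⟩ := Nat.exists_eq_add_of_lt ha
  refine ⟨0, X 0 ^ a, ?_⟩
  rw [map_pow, aeval_X]
  simp [pow_succ, mul_comm]

lemma dec_monomial : ∀ b a : ℕ,
    Dec p ((X 0 : MvPolynomial (Fin 2) k) ^ a * X 1 ^ b) := by
  intro b
  induction b using Nat.strong_induction_on with
  | _ b IH =>
    intro a
    match b, a with
    | 0, 0 => exact ⟨1, 0, by simp⟩
    | 0, (a + 1) => simpa using Dec.Xpow (Nat.succ_pos a)
    | (b + 1), (a + 1) =>
      have h := (IH b (Nat.lt_succ_self b) a).mulD2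
      have : (X 0 : MvPolynomial (Fin 2) k) ^ (a+1) * X 1 ^ (b+1)
          = X 0 * X 1 * (X 0 ^ a * X 1 ^ b) := by ring
      rwa [this]
    | (b + 1), 0 =>
      have hbin := add_pow (X 0 ^ p : MvPolynomial (Fin 2) k) (X 1) (b + 1)
      rw [Finset.sum_range_succ'] at hbin
      simp only [pow_zero, one_mul, Nat.choose_zero_right, Nat.cast_one, mul_one] at hbin
      have hX1 : (X 0 : MvPolynomial (Fin 2) k) ^ 0 * X 1 ^ (b+1)
          = (X 0 ^ p + X 1) ^ (b + 1)
            - ∑ i ∈ Finset.range (b + 1),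
              (X 0 ^ p) ^ (i+1) * X 1 ^ (b + 1 - (i+1)) * ((b+1).choose (i+1) : MvPolynomial (Fin 2) k) := by
        rw [pow_zero, one_mul]
        rw [eq_sub_iff_add_eq, add_comm]
        exact hbin.symm
      rw [hX1]
      refine (Dec.D1pow (b+1)).sub (Dec.sum ?_)
      intro i hi
      rw [Finset.mem_range] at hi
      have hrec : Dec p ((X 0 : MvPolynomial (Fin 2) k) ^ (p * (i+1)) * X 1 ^ (b + 1 - (i+1))) := by
        have : b + 1 - (i + 1) = b - i := by omega
        rw [this]
        exact IH (b - i) (by omega) (p * (i + 1))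
      have := hrec.natCast_mul ((b+1).choose (i+1))
      have heq : ((((b+1).choose (i+1) : ℕ)) : MvPolynomial (Fin 2) k) *
            ((X 0 : MvPolynomial (Fin 2) k) ^ (p * (i+1)) * X 1 ^ (b + 1 - (i+1)))
          = (X 0 ^ p) ^ (i+1) * X 1 ^ (b + 1 - (i+1)) * ((b+1).choose (i+1) : MvPolynomial (Fin 2) k) := by
        rw [← pow_mul]
        ring
      rwa [heq] at this

lemma dec_all (f : MvPolynomial (Fin 2) k) : Dec p f := by
  induction f using MvPolynomial.induction_on' with
  | monomial u c =>
    have hmon : (monomial u c : MvPolynomial (Fin 2) k)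
        = C c * (X 0 ^ u 0 * X 1 ^ u 1) := by
      rw [monomial_eq]
      congr 1
      rw [Finsupp.prod_fintype _ _ (fun i => pow_zero _), Fin.prod_univ_two]
    rw [hmon]
    exact (dec_monomial (u 1) (u 0)).C_mul c
  | add f g hf hg => exact hf.add hg



lemma dvd_sub_aeval (P : MvPolynomial (Fin 2) k) :
    (X 1 : MvPolynomial (Fin 2) k) ∣ P - aeval ![X 0, 0] P := by
  induction P using MvPolynomial.induction_on with
  | C c => simp [aeval_C, algebraMap_eq]
  | add f g hf hg =>
    rw [map_add]
    have : f + g - (aeval ![X 0, 0] f + aeval ![X 0, 0] g)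
        = (f - aeval ![X 0, 0] f) + (g - aeval ![X 0, 0] g) := by ring
    rw [this]; exact dvd_add hf hg
  | mul_X f i hf =>
    rw [map_mul, aeval_X]
    have : f * X i - aeval ![X 0, 0] f * ![X 0, 0] i
        = (f - aeval ![X 0, 0] f) * X i + aeval ![X 0, 0] f * (X i - ![X 0, 0] i) := by ring
    rw [this]
    refine dvd_add (hf.mul_right _) ?_
    fin_cases i
    · simp
    · simpa using Dvd.intro_left _ rfl

lemma X_dvd_of_aeval_zero {P : MvPolynomial (Fin 2) k}
    (h : aeval (![X 0, 0] : Fin 2 → MvPolynomial (Fin 2) k) P = 0) :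
    (X 1 : MvPolynomial (Fin 2) k) ∣ P := by
  have := dvd_sub_aeval P
  rwa [h, sub_zero] at this

variable {p : ℕ}

lemma eval_zero_of_eq (hp : 0 < p) : ∀ n : ℕ, ∀ P G : MvPolynomial (Fin 2) k,
    degreeOf 1 P ≤ n →
    aeval (![X 0 ^ p + X 1, X 0 * X 1] : Fin 2 → MvPolynomial (Fin 2) k) P
      = X 0 * aeval (![X 0, X 0 * X 1] : Fin 2 → MvPolynomial (Fin 2) k) G →
    aeval (![X 0 ^ p + X 1, X 0 * X 1] : Fin 2 → MvPolynomial (Fin 2) k) P = 0 := by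
  intro n
  induction n using Nat.strong_induction_on with
  | _ n IH =>
    intro P G hdeg h
    -- step 1 : apply Y ↦ 0
    set e1 : MvPolynomial (Fin 2) k →ₐ[k] MvPolynomial (Fin 2) k :=
      aeval ![X 0 ^ p + X 1, X 0 * X 1] with he1
    set e2 : MvPolynomial (Fin 2) k →ₐ[k] MvPolynomial (Fin 2) k :=
      aeval ![X 0, X 0 * X 1] with he2
    have h0 := congrArg (aeval (R := k) ![(0 : MvPolynomial (Fin 2) k), X 1]) h
    rw [comp_aeval_apply, map_mul, comp_aeval_apply, aeval_X] at h0
    have hf1 : (fun i => aeval (R := k) ![(0 : MvPolynomial (Fin 2) k), X 1]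
        (![X 0 ^ p + X 1, X 0 * X 1] i)) = ![X 1, 0] := by
      funext i; fin_cases i <;> simp [zero_pow hp.ne']
    have hf2 : (![(0 : MvPolynomial (Fin 2) k), X 1] 0) = 0 := rfl
    rw [hf1, hf2, zero_mul] at h0
    -- swap variables to get aeval ![X 0, 0] P = 0
    have hfs : (fun i => rename (Equiv.swap (0 : Fin 2) 1)
        ((![X 0, 0] : Fin 2 → MvPolynomial (Fin 2) k) i)) = ![X 1, 0] := by
      funext i; fin_cases i <;> simp
    have hswap : rename (Equiv.swap (0 : Fin 2) 1)
        (aeval (![X 0, 0] : Fin 2 → MvPolynomial (Fin 2) k) P)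
        = aeval ![X 1, (0 : MvPolynomial (Fin 2) k)] P := by
      rw [comp_aeval_apply, hfs]
    have hA : aeval (R := k) ![X 0, (0 : MvPolynomial (Fin 2) k)] P = 0 := by
      apply rename_injective _ (Equiv.swap (0 : Fin 2) 1).injective
      rw [hswap, h0, map_zero]
    obtain ⟨P1, hP1⟩ : (X 1 : MvPolynomial (Fin 2) k) ∣ P := X_dvd_of_aeval_zero hA
    -- step 2 : cancel X 0
    have hX0 : (X 0 : MvPolynomial (Fin 2) k) ≠ 0 := X_ne_zero _
    have hX1 : (X 1 : MvPolynomial (Fin 2) k) ≠ 0 := X_ne_zero _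
    have h2 : X 1 * e1 P1 = e2 G := by
      apply mul_left_cancel₀ hX0
      rw [← h, hP1, map_mul]
      have : e1 (X 1) = X 0 * X 1 := by rw [he1, aeval_X]; rfl
      rw [this]; ring
    -- step 3 : apply V ↦ 0 to h2
    have h3 := congrArg (aeval (R := k) ![X 0, (0 : MvPolynomial (Fin 2) k)]) h2
    have hv0 : (![X 0, (0 : MvPolynomial (Fin 2) k)] 1) = 0 := rfl
    rw [map_mul, aeval_X, hv0, zero_mul, he2, comp_aeval_apply] at h3
    have hg2 : (fun i => aeval (R := k) ![X 0, (0 : MvPolynomial (Fin 2) k)]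
        ((![X 0, X 0 * X 1] : Fin 2 → MvPolynomial (Fin 2) k) i)) = ![X 0, 0] := by
      funext i; fin_cases i <;> simp
    rw [hg2] at h3
    obtain ⟨G1, hG1⟩ : (X 1 : MvPolynomial (Fin 2) k) ∣ G := X_dvd_of_aeval_zero h3.symm
    -- step 4 : cancel X 1
    have h4 : e1 P1 = X 0 * e2 G1 := by
      apply mul_left_cancel₀ hX1
      rw [h2, hG1, map_mul]
      have : e2 (X 1) = X 0 * X 1 := by rw [he2, aeval_X]; rfl
      rw [this]; ring
    -- recurse
    by_cases hP10 : P1 = 0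
    · rw [hP1, hP10, mul_zero, map_zero]
    · have hdrop : degreeOf 1 P = degreeOf 1 P1 + 1 := by
        rw [hP1, mul_comm]
        exact (degreeOf_mul_X_eq_degreeOf_add_one_iff 1 P1).mpr hP10
      have hlt : degreeOf 1 P1 < n := by omega
      have := IH (degreeOf 1 P1) hlt P1 G1 le_rfl h4
      rw [hP1, map_mul, this, mul_zero]


end Stmt7

open Stmt7 in
/-- With `Y = X 0`, `V = X 1`, `D_1 = Y^p + V`, `D_2 = Y·V`, `CA = k[Y,V]` decomposes as a
`DA = k[D_1,D_2]`-module into the internal direct sum `DA ⊕ Y·CB` with `CB = k[Y, D_2]`: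
every `f ∈ CA` is uniquely `f = d + Y·g` with `d ∈ DA`, `g ∈ CB`. -/
theorem stmt_7 (p : ℕ) (hp : p.Prime) :
    let Y : MvPolynomial (Fin 2) (ZMod p) := X 0
    let V : MvPolynomial (Fin 2) (ZMod p) := X 1
    let D1 := Y ^ p + V
    let D2 := Y * V
    ∀ f : MvPolynomial (Fin 2) (ZMod p),
      ∃! c : (Algebra.adjoin (ZMod p) {D1, D2}) × (Algebra.adjoin (ZMod p) {Y, D2}),
        f = (c.1 : MvPolynomial (Fin 2) (ZMod p)) +
          Y * (c.2 : MvPolynomial (Fin 2) (ZMod p)) := by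
  haveI : Fact p.Prime := ⟨hp⟩
  intro Y V D1 D2 f
  obtain ⟨P, Q, hPQ⟩ := dec_all (k := ZMod p) (p := p) f
  refine ⟨⟨⟨aeval ![D1, D2] P, (mem_adjoin_pair_iff _ _ _).2 ⟨P, rfl⟩⟩,
      ⟨aeval ![Y, D2] Q, (mem_adjoin_pair_iff _ _ _).2 ⟨Q, rfl⟩⟩⟩, hPQ, ?_⟩
  rintro ⟨⟨d, hd⟩, ⟨g, hg⟩⟩ h'
  obtain ⟨Pd, hPd⟩ := (mem_adjoin_pair_iff _ _ d).1 hd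
  obtain ⟨Qg, hQg⟩ := (mem_adjoin_pair_iff _ _ g).1 hg
  simp only at h'
  have key : aeval ![D1, D2] (Pd - P) = Y * aeval ![Y, D2] (Q - Qg) := by
    rw [map_sub, map_sub, hPd, hQg]
    have h1 : f = d + Y * g := h'
    have h2 : f = aeval ![D1, D2] P + Y * aeval ![Y, D2] Q := hPQ
    linear_combination h2 - h1
  have h0 : aeval ![D1, D2] (Pd - P) = 0 :=
    eval_zero_of_eq hp.pos (degreeOf 1 (Pd - P)) (Pd - P) (Q - Qg) le_rfl key
  have hX0 : (X 0 : MvPolynomial (Fin 2) (ZMod p)) ≠ 0 := X_ne_zero _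
  have hdd : d = aeval ![D1, D2] P := by
    have := h0
    rw [map_sub, hPd, sub_eq_zero] at this
    exact this
  have hgg : g = aeval ![Y, D2] Q := by
    have h3 : Y * aeval ![Y, D2] (Q - Qg) = 0 := by rw [← key, h0]
    have h4 : aeval ![Y, D2] (Q - Qg) = 0 := by
      rcases mul_eq_zero.1 h3 with h | h
      · exact absurd h hX0
      · exact h
    rw [map_sub, hQg, sub_eq_zero] at h4
    exact h4.symm
  exact Prod.ext (Subtype.ext hdd) (Subtype.ext hgg)
end

section
/- Let p be a prime and set Y, V algebraically independent over F_p, D_1 = Y^p + V, D_2 = YV, DA = F_p[D_1,D_2]. Then k[Y,V] ⊖ k[Y,D_2]·Y ≅ DA and consequently, writing CB = F_p[Y,D_2], one has CA ⊖ CB{Y} ≅ DA as graded DA-modules, where A ⊖ B = C means A = B ⊕ C. -/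
open MvPolynomial

section Stmt16AuxSec
open Finset

namespace Stmt16Aux

variable (p : ℕ)

noncomputable abbrev RR (p : ℕ) := MvPolynomial (Fin 2) (ZMod p)

noncomputable def mexp (i j : ℕ) : Fin 2 →₀ ℕ := Finsupp.single 0 i + Finsupp.single 1 j

lemma mexp_apply0 (i j : ℕ) : mexp i j 0 = i := by
  simp [mexp, Finsupp.single_apply]

lemma mexp_apply1 (i j : ℕ) : mexp i j 1 = j := by
  simp [mexp, Finsupp.single_apply]

lemma eq_mexp (m : Fin 2 →₀ ℕ) : m = mexp (m 0) (m 1) := by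
  ext i
  fin_cases i <;> simp [mexp_apply0, mexp_apply1]

lemma mexp_inj {i j i' j' : ℕ} (h : mexp i j = mexp i' j') : i = i' ∧ j = j' := by
  constructor
  · have := congrArg (fun f => f 0) h; simpa [mexp_apply0] using this
  · have := congrArg (fun f => f 1) h; simpa [mexp_apply1] using this

lemma X_pow_mul (i j : ℕ) :
    (X 0 : RR p) ^ i * X 1 ^ j = monomial (mexp i j) (1 : ZMod p) := by
  rw [X_pow_eq_monomial, X_pow_eq_monomial, monomial_mul, one_mul, mexp]

/-- Expansion of `D1^a * D2^i` into monomials. -/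
lemma expand (i a : ℕ) :
    ((X 0 : RR p) ^ p + X 1) ^ a * (X 0 * X 1) ^ i =
      ∑ k ∈ range (a + 1),
        monomial (mexp (p * k + i) (a - k + i)) ((a.choose k : ZMod p)) := by
  rw [add_pow, Finset.sum_mul]
  refine Finset.sum_congr rfl fun k hk => ?_
  have h1 : ((X 0 : RR p) ^ p) ^ k * X 1 ^ (a - k) * (a.choose k : RR p) * (X 0 * X 1) ^ i
      = (C ((a.choose k : ZMod p)) : RR p) * (X 0 ^ (p * k + i) * X 1 ^ (a - k + i)) := by
    rw [← pow_mul, mul_pow, pow_add, pow_add]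
    rw [map_natCast C]
    ring
  rw [h1, X_pow_mul, C_mul_monomial, mul_one]

/-- The subalgebra of polynomials supported on monomials with `m 0 ≥ m 1`. -/
noncomputable def SB : Subalgebra (ZMod p) (RR p) where
  carrier := {f | ∀ m : Fin 2 →₀ ℕ, m 0 < m 1 → coeff m f = 0}
  add_mem' := by
    intro f g hf hg m hm
    rw [coeff_add, hf m hm, hg m hm, add_zero]
  mul_mem' := by
    intro f g hf hg m hm
    rw [coeff_mul]
    refine Finset.sum_eq_zero fun x hx => ?_
    rw [Finset.HasAntidiagonal.mem_antidiagonal] at hx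
    have h0 : x.1 0 + x.2 0 = m 0 := by rw [← hx]; simp [Finsupp.add_apply]
    have h1 : x.1 1 + x.2 1 = m 1 := by rw [← hx]; simp [Finsupp.add_apply]
    rcases (by omega : x.1 0 < x.1 1 ∨ x.2 0 < x.2 1) with h | h
    · rw [hf _ h, zero_mul]
    · rw [hg _ h, mul_zero]
  one_mem' := by
    intro m hm
    rw [coeff_one, if_neg]
    intro h
    rw [← h] at hm
    simp at hm
  zero_mem' := by intro m hm; simp
  algebraMap_mem' := by
    intro c m hm
    rw [algebraMap_eq, coeff_C, if_neg]
    intro h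
    rw [← h] at hm
    simp at hm

lemma CB_le_SB : Algebra.adjoin (ZMod p) {(X 0 : RR p), X 0 * X 1} ≤ SB p := by
  apply Algebra.adjoin_le
  rintro x (rfl | rfl)
  · intro m hm
    rw [coeff_X', if_neg]
    intro h
    rw [← h] at hm
    simp [Finsupp.single_apply] at hm
  · intro m hm
    rw [show ((X 0 : RR p) * X 1) = X 0 ^ 1 * X 1 ^ 1 by ring, X_pow_mul,
      coeff_monomial, if_neg]
    intro h
    rw [← h] at hm
    rw [mexp_apply0, mexp_apply1] at hm
    omega

lemma coeff_X_mul_CB {g : RR p} (hg : g ∈ Algebra.adjoin (ZMod p) {(X 0 : RR p), X 0 * X 1})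
    (m : Fin 2 →₀ ℕ) (hm : m 0 ≤ m 1) : coeff m (X 0 * g) = 0 := by
  rw [coeff_X_mul']
  split_ifs with h
  · refine CB_le_SB p hg _ ?_
    have h0 : m 0 ≠ 0 := by simpa [Finsupp.mem_support_iff] using h
    rw [Finsupp.tsub_apply, Finsupp.tsub_apply]
    simp only [Finsupp.single_apply, if_pos, if_neg, Fin.isValue]
    norm_num
    omega
  · rfl

/-- The decomposition predicate. -/
def Pp (f : RR p) : Prop :=
  ∃ d ∈ Algebra.adjoin (ZMod p) {(X 0 : RR p) ^ p + X 1, X 0 * X 1},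
    ∃ g ∈ Algebra.adjoin (ZMod p) {(X 0 : RR p), X 0 * X 1}, f = d + X 0 * g

lemma Pp_zero : Pp p 0 := ⟨0, zero_mem _, 0, zero_mem _, by ring⟩

lemma Pp_add {f g : RR p} (hf : Pp p f) (hg : Pp p g) : Pp p (f + g) := by
  obtain ⟨d1, hd1, g1, hg1, rfl⟩ := hf
  obtain ⟨d2, hd2, g2, hg2, rfl⟩ := hg
  exact ⟨d1 + d2, add_mem hd1 hd2, g1 + g2, add_mem hg1 hg2, by ring⟩

lemma Pp_Cmul {f : RR p} (c : ZMod p) (hf : Pp p f) : Pp p (C c * f) := by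
  obtain ⟨d, hd, g, hg, rfl⟩ := hf
  have hC : ∀ S : Subalgebra (ZMod p) (RR p), (C c : RR p) ∈ S := fun S => by
    rw [← algebraMap_eq]; exact S.algebraMap_mem c
  exact ⟨C c * d, mul_mem (hC _) hd, C c * g, mul_mem (hC _) hg, by ring⟩

lemma Pp_neg {f : RR p} (hf : Pp p f) : Pp p (-f) := by
  have := Pp_Cmul p (-1) hf
  rwa [map_neg, map_one, neg_one_mul] at this

lemma Pp_sub {f g : RR p} (hf : Pp p f) (hg : Pp p g) : Pp p (f - g) := by
  rw [sub_eq_add_neg]; exact Pp_add p hf (Pp_neg p hg)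

lemma Pp_sum {ι : Type*} {s : Finset ι} {F : ι → RR p}
    (h : ∀ m ∈ s, Pp p (F m)) : Pp p (∑ m ∈ s, F m) := by
  classical
  induction s using Finset.induction_on with
  | empty => simpa using Pp_zero p
  | insert _ _ hx ih =>
    rw [Finset.sum_insert hx]
    exact Pp_add p (h _ (Finset.mem_insert_self _ _))
      (ih fun m hm => h m (Finset.mem_insert_of_mem hm))

lemma Pp_DA {d : RR p}
    (hd : d ∈ Algebra.adjoin (ZMod p) {(X 0 : RR p) ^ p + X 1, X 0 * X 1}) : Pp p d :=
  ⟨d, hd, 0, zero_mem _, by ring⟩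

lemma key (a : ℕ) : ∀ i j : ℕ, j ≤ i + a → Pp p (monomial (mexp i j) (1 : ZMod p)) := by
  induction a using Nat.strong_induction_on with
  | _ a IH =>
  intro i j hj
  rcases le_or_gt j i with hle | hlt
  · -- j ≤ i : the monomial lies in Y·CB or in DA
    rcases eq_or_lt_of_le hle with rfl | hlt'
    · -- i = j : D2 ^ i ∈ DA
      refine Pp_DA p ?_
      rw [← X_pow_mul, ← mul_pow]
      exact pow_mem (Algebra.subset_adjoin (by simp)) _
    · -- j < i
      refine ⟨0, zero_mem _, X 0 ^ (i - j - 1) * (X 0 * X 1) ^ j,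
        mul_mem (pow_mem (Algebra.subset_adjoin (by simp)) _)
          (pow_mem (Algebra.subset_adjoin (by simp)) _), ?_⟩
      rw [← X_pow_mul, zero_add]
      have h1 : X 0 * (X 0 ^ (i - j - 1) * ((X 0 : RR p) * X 1) ^ j)
          = X 0 ^ (1 + (i - j - 1) + j) * (X 1 : RR p) ^ j := by
        rw [pow_add, pow_add, mul_pow]; ring
      rw [h1, show 1 + (i - j - 1) + j = i from by omega]
  · -- i < j
    set a0 := j - i with ha0
    have hj' : j = a0 + i := by omega
    have ha0a : a0 ≤ a := by omega
    have ha01 : 1 ≤ a0 := by omega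
    have hexp := expand p i a0
    rw [Finset.sum_range_succ'] at hexp
    have hkey : monomial (mexp i j) (1 : ZMod p) =
        ((X 0 : RR p) ^ p + X 1) ^ a0 * (X 0 * X 1) ^ i -
          ∑ k ∈ range a0,
            monomial (mexp (p * (k + 1) + i) (a0 - (k + 1) + i)) ((a0.choose (k + 1) : ZMod p)) := by
      rw [hexp]
      have : mexp (p * 0 + i) (a0 - 0 + i) = mexp i j := by
        rw [hj']; norm_num
      rw [this]
      simp [Nat.choose_zero_right]
    rw [hkey]
    apply Pp_sub p (Pp_DA p (mul_mem (pow_mem (Algebra.subset_adjoin (by simp)) _)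
      (pow_mem (Algebra.subset_adjoin (by simp)) _)))
    refine Pp_sum p fun k hk => ?_
    have hmono : (monomial (mexp (p * (k + 1) + i) (a0 - (k + 1) + i))
        ((a0.choose (k + 1) : ZMod p)))
        = C ((a0.choose (k + 1) : ZMod p)) *
          monomial (mexp (p * (k + 1) + i) (a0 - (k + 1) + i)) (1 : ZMod p) := by
      rw [C_mul_monomial, mul_one]
    rw [hmono]
    refine Pp_Cmul p _ (IH (a - 1) (by omega) _ _ ?_)
    have hk' : k + 1 ≥ 1 := by omega
    omega

lemma exists_decomp (f : RR p) : Pp p f := by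
  rw [as_sum f]
  refine Pp_sum p fun m hm => ?_
  have : (monomial m (coeff m f) : RR p)
      = C (coeff m f) * monomial (mexp (m 0) (m 1)) (1 : ZMod p) := by
    rw [C_mul_monomial, mul_one, ← eq_mexp]
  rw [this]
  exact Pp_Cmul p _ (key p (m 1) _ _ (by omega))

lemma coeff_D_pow (hp1 : 0 < p) {a b : ℕ} (a' b' : ℕ) (ha' : a' ≤ a) :
    coeff (mexp b (a + b)) (((X 0 : RR p) ^ p + X 1) ^ a' * (X 0 * X 1) ^ b')
      = if a' = a ∧ b' = b then 1 else 0 := by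
  rw [expand, coeff_sum]
  simp only [coeff_monomial]
  split_ifs with hab
  · obtain ⟨rfl, rfl⟩ := hab
    rw [Finset.sum_eq_single_of_mem 0 (Finset.mem_range.mpr (by omega))]
    · rw [if_pos (by norm_num)]
      simp
    · intro k hk hk0
      rw [if_neg]
      intro hcon
      obtain ⟨h1, h2⟩ := mexp_inj hcon
      obtain ⟨t, ht⟩ : ∃ t, p * k = t := ⟨_, rfl⟩
      have hkt : k ≤ t := ht ▸ Nat.le_mul_of_pos_left k hp1
      rw [ht] at h1
      omega
  · refine Finset.sum_eq_zero fun k hk => ?_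
    rw [Finset.mem_range] at hk
    rw [if_neg]
    intro hcon
    obtain ⟨h1, h2⟩ := mexp_inj hcon
    obtain ⟨t, ht⟩ : ∃ t, p * k = t := ⟨_, rfl⟩
    have hkt : k ≤ t := ht ▸ Nat.le_mul_of_pos_left k hp1
    rw [ht] at h1
    omega

lemma DA_unique (hp1 : 0 < p) {d : RR p}
    (hd : d ∈ Algebra.adjoin (ZMod p) {(X 0 : RR p) ^ p + X 1, X 0 * X 1})
    (h : ∀ m : Fin 2 →₀ ℕ, m 0 ≤ m 1 → coeff m d = 0) : d = 0 := by
  have hrange : Set.range (![((X 0 : RR p) ^ p + X 1), X 0 * X 1])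
      = {(X 0 : RR p) ^ p + X 1, X 0 * X 1} := by
    ext x
    simp [Fin.exists_fin_two]
    tauto
  rw [← hrange, Algebra.adjoin_range_eq_range_aeval] at hd
  obtain ⟨q, hq'⟩ := hd
  have hq : (aeval ![((X 0 : RR p) ^ p + X 1), X 0 * X 1]) q = d := hq'
  by_contra hne
  have hq0 : q ≠ 0 := by rintro rfl; simp at hq; exact hne hq.symm
  obtain ⟨m, hm, hmax⟩ := Finset.exists_max_image q.support (fun n => n 0)
    (by rwa [Finset.nonempty_iff_ne_empty, Ne, support_eq_empty])
  have hcoeff : coeff (mexp (m 1) (m 0 + m 1)) d = coeff m q := by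
    rw [← hq, aeval_def, eval₂_eq']
    rw [coeff_sum]
    have hterm : ∀ n ∈ q.support,
        coeff (mexp (m 1) (m 0 + m 1))
          ((algebraMap (ZMod p) (RR p)) (coeff n q) *
            ∏ i : Fin 2, (![((X 0 : RR p) ^ p + X 1), X 0 * X 1]) i ^ n i)
        = if n = m then coeff n q else 0 := by
      intro n hn
      rw [Fin.prod_univ_two]
      simp only [Matrix.cons_val_zero, Matrix.cons_val_one, Matrix.head_cons]
      rw [algebraMap_eq, coeff_C_mul, coeff_D_pow p hp1 (n 0) (n 1) (hmax n hn)]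
      have hiff : n = m ↔ n 0 = m 0 ∧ n 1 = m 1 := by
        constructor
        · rintro rfl; exact ⟨rfl, rfl⟩
        · rintro ⟨h1, h2⟩
          rw [eq_mexp n, eq_mexp m, h1, h2]
      by_cases hnm : n = m
      · rw [if_pos hnm, if_pos (hiff.mp hnm), mul_one]
      · rw [if_neg hnm, if_neg (fun hc => hnm (hiff.mpr hc)), mul_zero]
    rw [Finset.sum_congr rfl hterm, Finset.sum_ite_eq' q.support m (fun n => coeff n q),
      if_pos hm]
  have := h (mexp (m 1) (m 0 + m 1)) (by rw [mexp_apply0, mexp_apply1]; omega)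
  rw [hcoeff] at this
  exact (mem_support_iff.mp hm) this

end Stmt16Aux



end Stmt16AuxSec

/-- With `Y = X 0`, `V = X 1`, `D_1 = Y^p + V`, `D_2 = YV`, `DA = F_p[D_1,D_2]`,
`CB = F_p[Y,D_2]`: the internal direct sum decomposition `CA = DA ⊕ Y·CB` of graded
`DA`-modules, i.e. `CA ⊖ CB{Y} ≅ DA` (`A ⊖ B = C` meaning `A = B ⊕ C`): every
`f ∈ k[Y,V]` is uniquely `f = d + Y·g` with `d ∈ DA`, `g ∈ CB`. -/
theorem stmt_16 (p : ℕ) (hp : p.Prime) :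
    let Y : MvPolynomial (Fin 2) (ZMod p) := X 0
    let V : MvPolynomial (Fin 2) (ZMod p) := X 1
    let D1 := Y ^ p + V
    let D2 := Y * V
    ∀ f : MvPolynomial (Fin 2) (ZMod p),
      ∃! c : (Algebra.adjoin (ZMod p) {D1, D2}) × (Algebra.adjoin (ZMod p) {Y, D2}),
        f = (c.1 : MvPolynomial (Fin 2) (ZMod p)) +
          Y * (c.2 : MvPolynomial (Fin 2) (ZMod p)) := by
  intro Y V D1 D2 f
  haveI := Fact.mk hp
  obtain ⟨d, hd, g, hg, hf⟩ := Stmt16Aux.exists_decomp p f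
  refine ⟨(⟨d, hd⟩, ⟨g, hg⟩), hf, ?_⟩
  rintro ⟨⟨d', hd'⟩, ⟨g', hg'⟩⟩ h'
  have h2 : d + X 0 * g = d' + X 0 * g' := hf.symm.trans h'
  have heq : d' - d = X 0 * (g - g') := by linear_combination -h2
  have hgg : g - g' ∈ Algebra.adjoin (ZMod p) {(X 0 : Stmt16Aux.RR p), X 0 * X 1} :=
    sub_mem hg hg'
  have hvanish : ∀ m : Fin 2 →₀ ℕ, m 0 ≤ m 1 → MvPolynomial.coeff m (d' - d) = 0 := by
    intro m hm
    rw [heq]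
    exact Stmt16Aux.coeff_X_mul_CB p hgg m hm
  have hd0 : d' - d = 0 := Stmt16Aux.DA_unique p hp.pos (sub_mem hd' hd) hvanish
  have hdeq : d' = d := sub_eq_zero.mp hd0
  have hgeq : g' = g := by
    have hx : X 0 * (g - g') = 0 := by rw [← heq, hd0]
    rcases mul_eq_zero.mp hx with hx0 | hx0
    · exact absurd hx0 (MvPolynomial.X_ne_zero 0)
    · exact (sub_eq_zero.mp hx0).symm
  simp only [Prod.mk.injEq]
  exact ⟨Subtype.ext hdeq, Subtype.ext hgeq⟩
end
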